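/- Let X be a Banach space admitting a sequence of compact operators (K_n) on X with K_n x → x in norm for every x ∈ X and ‖Id_X − 2 K_n‖ → 1. Then for every x ∈ X and every weakly null sequence (x_n) in X one has limsup_n ‖x + x_n‖ = limsup_n ‖x − x_n‖ (property (wM)). -/

import Mathlib

open Filter Topology NormedSpace ENNReal MeasureTheory

noncomputable section

/-- A sequence in `X` is weakly null if it tends to zero in the weak topology,
i.e. `f (xs n) → 0` for every continuous linear functional `f`. -/
def WeaklyNull {X : Type*} [NormedAddCommGroup X] [NormedSpace ℝ X] (xs : ℕ → X) : Prop :=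
  ∀ f : StrongDual ℝ X, Tendsto (fun n => f (xs n)) atTop (𝓝 0)

/-- The annihilator `J^⊥` of a subspace `J` in the continuous dual. -/
def annih {Z : Type*} [NormedAddCommGroup Z] [NormedSpace ℝ Z] (J : Submodule ℝ Z) :
    Submodule ℝ (StrongDual ℝ Z) where
  carrier := {f | ∀ x ∈ J, f x = 0}
  add_mem' := by
    intro f g hf hg x hx
    simp [hf x hx, hg x hx]
  zero_mem' := by intro x hx; rfl
  smul_mem' := by
    intro c f hf x hx
    simp [hf x hx]

/-- `J` is an M-ideal in `Z`: there is a closed subspace `V` of the dual such that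
`Z* = J^⊥ ⊕₁ V` (algebraic direct sum with additive norm). -/
def IsMIdeal {Z : Type*} [NormedAddCommGroup Z] [NormedSpace ℝ Z] (J : Submodule ℝ Z) : Prop :=
  ∃ V : Submodule ℝ (StrongDual ℝ Z), IsClosed (V : Set (StrongDual ℝ Z)) ∧
    (∀ f : StrongDual ℝ Z, ∃ g ∈ annih J, ∃ h ∈ V, f = g + h) ∧
    annih J ⊓ V = ⊥ ∧
    ∀ g ∈ annih J, ∀ h ∈ V, ‖g + h‖ = ‖g‖ + ‖h‖

/-- Conditions (a)–(c) on a sequence of compact operators `K n` on `X`: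
(a) `K n x → x` for all `x`; (b) `(K n)* f → f` in norm for every `f ∈ X*`;
(c) `‖Id − 2 K n‖ → 1`. -/
def ABC {X : Type*} [NormedAddCommGroup X] [NormedSpace ℝ X] (K : ℕ → X →L[ℝ] X) : Prop :=
  (∀ n, IsCompactOperator (K n)) ∧
  (∀ x : X, Tendsto (fun n => (K n) x) atTop (𝓝 x)) ∧
  (∀ f : StrongDual ℝ X, Tendsto (fun n => f.comp (K n)) atTop (𝓝 f)) ∧
  Tendsto (fun n => ‖ContinuousLinearMap.id ℝ X - (2 : ℝ) • K n‖) atTop (𝓝 1)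

/-- Inequality (7) for `X` and exponent `p`. -/
def Ineq7 (X : Type*) [NormedAddCommGroup X] [NormedSpace ℝ X] (p : ℝ) : Prop :=
  ∀ (x : X) (xs : ℕ → X), WeaklyNull xs →
    limsup (fun n => (‖x‖ ^ p + ‖xs n‖ ^ p) ^ (1 / p)) atTop ≤
    limsup (fun n => ((‖x + xs n‖ ^ p + ‖x - xs n‖ ^ p) / 2) ^ (1 / p)) atTop

/-! For any operator `T`, `x - y = -((Id - 2T)(x + y) + 2(Tx - x) + 2Ty)`. When `T` is compact it
sends the weakly null `xₙ` to a norm-null sequence, so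
`limsup ‖x - xₙ‖ ≤ ‖Id - 2Kₘ‖ · limsup ‖x + xₙ‖ + 2‖Kₘx - x‖` for every `m`, and letting `m → ∞`
gives `limsup ‖x - xₙ‖ ≤ limsup ‖x + xₙ‖`. Applied to `-xₙ` this is the reverse inequality. -/

lemma Filter.limsup_le_mul_limsup_add {ι : Type*} {l : Filter ι} [l.NeBot] {u v w : ι → ℝ}
    {a b : ℝ} (ha : 0 ≤ a) (hu : IsCoboundedUnder (· ≤ ·) l u)
    (hv : IsBoundedUnder (· ≤ ·) l v) (hv' : IsBoundedUnder (· ≥ ·) l v)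
    (hw : Tendsto w l (𝓝 0)) (h : ∀ᶠ i in l, u i ≤ a * v i + b + w i) :
    limsup u l ≤ a * limsup v l + b := by
  have hmono : Monotone fun t : ℝ => a * t + b := fun _ _ hst => by dsimp only; gcongr
  have hbdd : IsBoundedUnder (· ≤ ·) l fun i => a * v i + b := hmono.isBoundedUnder_le_comp hv
  have hbdd' : IsBoundedUnder (· ≥ ·) l fun i => a * v i + b := hmono.isBoundedUnder_ge_comp hv'
  calc limsup u l ≤ limsup ((fun i => a * v i + b) + w) l :=
        limsup_le_limsup h hu (isBoundedUnder_le_add hbdd hw.isBoundedUnder_le)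
    _ ≤ limsup (fun i => a * v i + b) l + limsup w l :=
        limsup_add_le hbdd' hbdd hw.isBoundedUnder_ge.isCoboundedUnder_le hw.isBoundedUnder_le
    _ = a * limsup v l + b := by
        rw [hw.limsup_eq, add_zero]
        exact (hmono.map_limsup_of_continuousAt v (by fun_prop) hv hv'.isCoboundedUnder_le).symm

namespace WeaklyNull

variable {X : Type*} [NormedAddCommGroup X] [NormedSpace ℝ X] {xs : ℕ → X}

lemma neg (h : WeaklyNull xs) : WeaklyNull (-xs) := fun f => by
  simpa using (h f).neg

-- Uniform boundedness in the complete space `X**`, through the isometric embedding `X → X**`.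
lemma exists_norm_le (h : WeaklyNull xs) : ∃ C, ∀ n, ‖xs n‖ ≤ C := by
  have hpt : ∀ f : StrongDual ℝ X, ∃ C, ∀ n, ‖inclusionInDoubleDualLi ℝ (xs n) f‖ ≤ C :=
    fun f => (h f).norm.bddAbove_range.imp fun C hC n => hC ⟨n, rfl⟩
  obtain ⟨C, hC⟩ := banach_steinhaus hpt
  exact ⟨C, fun n => ((inclusionInDoubleDualLi ℝ).norm_map (xs n)).symm.trans_le (hC n)⟩

end WeaklyNull

section Operators

variable {X Y : Type*} [NormedAddCommGroup X] [NormedSpace ℝ X]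
  [NormedAddCommGroup Y] [NormedSpace ℝ Y]

-- The images lie in a compact set, and their only possible cluster point is `0`
-- because every functional sends them to `0`.
lemma IsCompactOperator.tendsto_zero_of_weaklyNull {T : X →L[ℝ] Y} (hT : IsCompactOperator T)
    {xs : ℕ → X} (hxs : WeaklyNull xs) : Tendsto (fun n => T (xs n)) atTop (𝓝 0) := by
  obtain ⟨C, hC⟩ := hxs.exists_norm_le
  refine (hT.isCompact_closure_image_closedBall C).tendsto_nhds_of_unique_mapClusterPt
    (Eventually.of_forall fun n => subset_closure ⟨xs n, by simpa using hC n, rfl⟩)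
    fun y _ hy => SeparatingDual.eq_zero_of_forall_dual_eq_zero (R := ℝ) fun f => ?_
  have hfy : MapClusterPt (f y) atTop fun n => f (T (xs n)) :=
    hy.tendsto_comp (f.continuous.tendsto y)
  exact eq_of_nhds_neBot (hfy.clusterPt.mono (hxs (f.comp T)))

lemma norm_sub_le_opNorm_id_sub_two_smul_mul (T : X →L[ℝ] X) (x y : X) :
    ‖x - y‖ ≤ ‖ContinuousLinearMap.id ℝ X - (2 : ℝ) • T‖ * ‖x + y‖ + 2 * ‖T x - x‖ + 2 * ‖T y‖ :=
  calc ‖x - y‖ = ‖(ContinuousLinearMap.id ℝ X - (2 : ℝ) • T) (x + y) + (2 : ℝ) • (T x - x)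
        + (2 : ℝ) • T y‖ := by
        rw [← norm_neg]
        congr 1
        simp only [sub_apply, smul_apply, ContinuousLinearMap.id_apply, map_add]
        module
    _ ≤ _ := by
      refine (norm_add₃_le ..).trans ?_
      simp only [norm_smul, Real.norm_two]
      gcongr
      exact ContinuousLinearMap.le_opNorm _ _

lemma IsCompactOperator.limsup_norm_sub_le {T : X →L[ℝ] X} (hT : IsCompactOperator T) (x : X)
    {xs : ℕ → X} (hxs : WeaklyNull xs) :
    limsup (fun n => ‖x - xs n‖) atTop ≤
      ‖ContinuousLinearMap.id ℝ X - (2 : ℝ) • T‖ * limsup (fun n => ‖x + xs n‖) atTop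
        + 2 * ‖T x - x‖ := by
  obtain ⟨C, hC⟩ := hxs.exists_norm_le
  have hTxs : Tendsto (fun n => 2 * ‖T (xs n)‖) atTop (𝓝 0) := by
    simpa using (hT.tendsto_zero_of_weaklyNull hxs).norm.const_mul 2
  exact limsup_le_mul_limsup_add (l := atTop) (norm_nonneg _)
    (isCoboundedUnder_le_of_le atTop fun _ => norm_nonneg _)
    (isBoundedUnder_of ⟨‖x‖ + C, fun n => (norm_add_le _ _).trans (by gcongr; exact hC n)⟩)
    (isBoundedUnder_of ⟨0, fun _ => norm_nonneg _⟩) hTxs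
    (Eventually.of_forall fun n => norm_sub_le_opNorm_id_sub_two_smul_mul T x (xs n))

lemma limsup_norm_sub_le_limsup_norm_add {K : ℕ → X →L[ℝ] X}
    (hcpt : ∀ n, IsCompactOperator (K n))
    (ha : ∀ x : X, Tendsto (fun n => (K n) x) atTop (𝓝 x))
    (hc : Tendsto (fun n => ‖ContinuousLinearMap.id ℝ X - (2 : ℝ) • K n‖) atTop (𝓝 1))
    (x : X) {xs : ℕ → X} (hxs : WeaklyNull xs) :
    limsup (fun n => ‖x - xs n‖) atTop ≤ limsup (fun n => ‖x + xs n‖) atTop := by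
  set L := limsup (fun n => ‖x + xs n‖) atTop
  have hKx : Tendsto (fun m => 2 * ‖K m x - x‖) atTop (𝓝 0) := by
    simpa using ((ha x).sub_const x).norm.const_mul 2
  have hbound : Tendsto (fun m => ‖ContinuousLinearMap.id ℝ X - (2 : ℝ) • K m‖ * L
      + 2 * ‖K m x - x‖) atTop (𝓝 L) := by
    simpa using (hc.mul_const L).add hKx
  exact ge_of_tendsto hbound (Eventually.of_forall fun m => (hcpt m).limsup_norm_sub_le x hxs)

end Operators

theorem property_wM_general (X : Type*) [NormedAddCommGroup X] [NormedSpace ℝ X]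
    (K : ℕ → X →L[ℝ] X) (hcpt : ∀ n, IsCompactOperator (K n))
    (ha : ∀ x : X, Tendsto (fun n => (K n) x) atTop (𝓝 x))
    (hc : Tendsto (fun n => ‖ContinuousLinearMap.id ℝ X - (2 : ℝ) • K n‖) atTop (𝓝 1)) :
    ∀ (x : X) (xs : ℕ → X), WeaklyNull xs →
      limsup (fun n => ‖x + xs n‖) atTop = limsup (fun n => ‖x - xs n‖) atTop := by
  intro x xs hxs
  have hneg := limsup_norm_sub_le_limsup_norm_add hcpt ha hc x hxs.neg
  simp only [Pi.neg_apply, sub_neg_eq_add, ← sub_eq_add_neg] at hneg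
  exact le_antisymm hneg (limsup_norm_sub_le_limsup_norm_add hcpt ha hc x hxs)

/-- Property (wM): if `X` admits compact operators `K n` with `K n x → x` and
`‖Id − 2 K n‖ → 1`, then `limsup ‖x + xₙ‖ = limsup ‖x − xₙ‖` for weakly null `(xₙ)`. -/
theorem property_wM (X : Type*) [NormedAddCommGroup X] [NormedSpace ℝ X] [CompleteSpace X]
    (K : ℕ → X →L[ℝ] X) (hcpt : ∀ n, IsCompactOperator (K n))
    (ha : ∀ x : X, Tendsto (fun n => (K n) x) atTop (𝓝 x))
    (hc : Tendsto (fun n => ‖ContinuousLinearMap.id ℝ X - (2 : ℝ) • K n‖) atTop (𝓝 1)) :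
    ∀ (x : X) (xs : ℕ → X), WeaklyNull xs →
      limsup (fun n => ‖x + xs n‖) atTop = limsup (fun n => ‖x - xs n‖) atTop :=
  property_wM_general X K hcpt ha hc
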